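/- arXiv:1102.2512 — 2 statements merged into one kernel-verified Lean document; each statement's English description precedes it below -/
import Mathlib

section
/- In a model category M, the class of weak equivalences satisfies the two-out-of-six property: for all composable morphisms r : X ⟶ Y, s : Y ⟶ Z, t : Z ⟶ T of M, if the composites s ∘ r and t ∘ s are weak equivalences, then r, s, t and t ∘ s ∘ r are weak equivalences. -/
open CategoryTheory

universe v u

/-- A class of morphisms is stable under retracts if whenever `f : X ⟶ Y` is a
retract of `g : X' ⟶ Y'` (in the arrow category) and `g` lies in the class,
then so does `f`. -/
def StableUnderRetracts {M : Type u} [Category.{v} M] (P : MorphismProperty M) : Prop :=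
  ∀ ⦃X Y X' Y' : M⦄ (f : X ⟶ Y) (g : X' ⟶ Y')
    (i : X ⟶ X') (r : X' ⟶ X) (i' : Y ⟶ Y') (r' : Y' ⟶ Y),
    i ≫ r = 𝟙 X → i' ≫ r' = 𝟙 Y → i ≫ g = f ≫ i' → r ≫ f = g ≫ r' → P g → P f

/-- A model category: a category with finite limits and colimits, together with
classes of weak equivalences, cofibrations and fibrations satisfying the
two-out-of-three, retract, lifting and factorization axioms. -/
class ModelCategory (M : Type u) [Category.{v} M] where
  weakEquivalences : MorphismProperty M
  cofibrations : MorphismProperty M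
  fibrations : MorphismProperty M
  hasFiniteLimits : Limits.HasFiniteLimits M
  hasFiniteColimits : Limits.HasFiniteColimits M
  twoOutOfThree : ∀ ⦃X Y Z : M⦄ (f : X ⟶ Y) (g : Y ⟶ Z),
    (weakEquivalences f → weakEquivalences g → weakEquivalences (f ≫ g)) ∧
    (weakEquivalences (f ≫ g) → weakEquivalences f → weakEquivalences g) ∧
    (weakEquivalences (f ≫ g) → weakEquivalences g → weakEquivalences f)
  weakEquivalences_retract : StableUnderRetracts weakEquivalences
  cofibrations_retract : StableUnderRetracts cofibrations
  fibrations_retract : StableUnderRetracts fibrations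
  lifting_trivialCofibration_fibration : ∀ ⦃A B X Y : M⦄ (i : A ⟶ B) (p : X ⟶ Y),
    cofibrations i → weakEquivalences i → fibrations p → HasLiftingProperty i p
  lifting_cofibration_trivialFibration : ∀ ⦃A B X Y : M⦄ (i : A ⟶ B) (p : X ⟶ Y),
    cofibrations i → fibrations p → weakEquivalences p → HasLiftingProperty i p
  factorization_trivialCofibration_fibration : ∀ ⦃X Y : M⦄ (f : X ⟶ Y),
    ∃ (Z : M) (i : X ⟶ Z) (p : Z ⟶ Y),
      cofibrations i ∧ weakEquivalences i ∧ fibrations p ∧ i ≫ p = f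
  factorization_cofibration_trivialFibration : ∀ ⦃X Y : M⦄ (f : X ⟶ Y),
    ∃ (Z : M) (i : X ⟶ Z) (p : Z ⟶ Y),
      cofibrations i ∧ fibrations p ∧ weakEquivalences p ∧ i ≫ p = f

/-!
It suffices to show that `s` is a weak equivalence; two-out-of-three then gives the rest.
Lifting `r` and `s` to cofibrant replacements, and then factoring through fibrations, reduces
this to the case where `Z` is cofibrant and `s`, `t` are fibrations. There `r ≫ s` being a weak
equivalence gives a section `σ` of `s`, and `s ≫ σ` is homotopic to `𝟙 Y` over the trivial
fibration `s ≫ t`, hence is a weak equivalence; finally `s` is a retract of `s ≫ σ`.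
-/

open Limits MorphismProperty

namespace ModelCategory

variable {M : Type u} [Category.{v} M] [ModelCategory M]

instance : (weakEquivalences : MorphismProperty M).HasTwoOutOfThreeProperty where
  comp_mem f g := (twoOutOfThree f g).1
  of_postcomp f g hg hfg := (twoOutOfThree f g).2.2 hfg hg
  of_precomp f g hf hfg := (twoOutOfThree f g).2.1 hfg hf

instance : (weakEquivalences : MorphismProperty M).ContainsIdentities where
  id_mem X := by
    obtain ⟨_, i, p, -, hi, -, hip⟩ := factorization_trivialCofibration_fibration (𝟙 X)
    have hpi : weakEquivalences (p ≫ i) :=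
      of_precomp _ _ _ hi (by rwa [← Category.assoc, hip, Category.id_comp])
    rw [← hip]
    exact comp_mem _ _ _ hi (of_postcomp _ _ _ hi hpi)

instance : (fibrations : MorphismProperty M).IsStableUnderComposition where
  comp_mem {A _ C} p q hp hq := by
    obtain ⟨_, j, f, hj, hj', hf, hjf⟩ := factorization_trivialCofibration_fibration (p ≫ q)
    have := lifting_trivialCofibration_fibration j p hj hj' hp
    have := lifting_trivialCofibration_fibration j q hj hj' hq
    have sq : CommSq (𝟙 A) j (p ≫ q) f := ⟨by rw [Category.id_comp, hjf]⟩
    -- `p ≫ q` is a retract of the fibration `f`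
    refine fibrations_retract (p ≫ q) f j sq.lift (𝟙 C) (𝟙 C) sq.fac_left
      (Category.id_comp _) ?_ ?_ hf
    · rw [Category.comp_id, hjf]
    · rw [Category.comp_id, sq.fac_right]

lemma weakEquivalences_of_comp_of_section {A B : M} {u : A ⟶ B} {v : B ⟶ A}
    (huv : u ≫ v = 𝟙 A) (h : weakEquivalences (v ≫ u)) : weakEquivalences v :=
  weakEquivalences_retract v (v ≫ u) (𝟙 B) (𝟙 B) u v (Category.id_comp _) huv
    (by rw [Category.id_comp]) (by rw [Category.id_comp, Category.assoc, huv, Category.comp_id])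
    h

/-- Cofibrancy in its lifting form; in a model category it is equivalent to `⊥ ⟶ X` being
a cofibration. -/
def IsCofibrant (X : M) : Prop :=
  ∀ ⦃A B : M⦄ (p : A ⟶ B), fibrations p → weakEquivalences p →
    ∀ f : X ⟶ B, ∃ g : X ⟶ A, g ≫ p = f

lemma exists_isCofibrant_trivialFibration (X : M) :
    ∃ (X' : M) (p : X' ⟶ X), IsCofibrant X' ∧ fibrations p ∧ weakEquivalences p := by
  have : HasFiniteColimits M := hasFiniteColimits
  obtain ⟨X', i, p, hi, hp, hp', -⟩ := factorization_cofibration_trivialFibration (initial.to X)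
  refine ⟨X', p, fun A B q hq hq' f => ?_, hp, hp'⟩
  have := lifting_cofibration_trivialFibration i q hi hq hq'
  have sq : CommSq (initial.to A) i q f := ⟨initial.hom_ext _ _⟩
  exact ⟨sq.lift, sq.fac_right⟩

lemma IsCofibrant.of_cofibration {Z N : M} (hZ : IsCofibrant Z) {i : Z ⟶ N}
    (hi : cofibrations i) : IsCofibrant N := by
  intro A B p hp hp' f
  obtain ⟨g, hg⟩ := hZ p hp hp' (i ≫ f)
  have := lifting_cofibration_trivialFibration i p hi hp hp'
  have sq : CommSq g i p f := ⟨hg⟩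
  exact ⟨sq.lift, sq.fac_right⟩

lemma exists_section_of_fibration {X Y Z : M} (hZ : IsCofibrant Z) (r : X ⟶ Y) {s : Y ⟶ Z}
    (hs : fibrations s) (hrs : weakEquivalences (r ≫ s)) : ∃ σ : Z ⟶ Y, σ ≫ s = 𝟙 Z := by
  obtain ⟨_, a, p, -, ha, hp, rfl⟩ := factorization_trivialCofibration_fibration r
  have hps : weakEquivalences (p ≫ s) := of_precomp _ _ _ ha (by rwa [← Category.assoc])
  obtain ⟨σ, hσ⟩ := hZ (p ≫ s) (comp_mem _ _ _ hp hs) hps (𝟙 Z)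
  exact ⟨σ ≫ p, by rwa [Category.assoc]⟩

/-- `f` is left homotopic to `𝟙 Y` over `T`, through a cylinder object whose inclusions, and
hence the homotopy itself, are weak equivalences. -/
lemma weakEquivalences_of_comp_eq_self {Y T : M} {q : Y ⟶ T} (hq : fibrations q)
    (hq' : weakEquivalences q) {f : Y ⟶ Y} (hf : f ≫ q = q) : weakEquivalences f := by
  have : HasFiniteColimits M := hasFiniteColimits
  obtain ⟨_, j, π, hj, -, hπ, hjπ⟩ :=
    factorization_cofibration_trivialFibration (coprod.desc (𝟙 Y) (𝟙 Y))
  have hι₀ : weakEquivalences (coprod.inl ≫ j) :=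
    of_postcomp _ _ _ hπ (by simpa [hjπ, coprod.inl_desc] using id_mem weakEquivalences Y)
  have hι₁ : weakEquivalences (coprod.inr ≫ j) :=
    of_postcomp _ _ _ hπ (by simpa [hjπ, coprod.inr_desc] using id_mem weakEquivalences Y)
  have := lifting_cofibration_trivialFibration j q hj hq hq'
  have sq : CommSq (coprod.desc (𝟙 Y) f) j q (π ≫ q) :=
    ⟨by ext <;> simp [reassoc_of% hjπ, hf, coprod.inl_desc, coprod.inr_desc]⟩
  have hH : weakEquivalences sq.lift :=
    of_precomp _ _ _ hι₀ (by simpa [coprod.inl_desc] using id_mem weakEquivalences Y)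
  have hH₁ : (coprod.inr ≫ j) ≫ sq.lift = f := by simp [coprod.inr_desc]
  exact hH₁ ▸ comp_mem _ _ _ hι₁ hH

lemma weakEquivalences_of_comp_of_comp_of_fibrations {X Y Z T : M} (hZ : IsCofibrant Z) (r : X ⟶ Y)
    {s : Y ⟶ Z} {t : Z ⟶ T} (hs : fibrations s) (ht : fibrations t)
    (hrs : weakEquivalences (r ≫ s)) (hst : weakEquivalences (s ≫ t)) :
    weakEquivalences s := by
  obtain ⟨σ, hσ⟩ := exists_section_of_fibration hZ r hs hrs
  have hsσ : weakEquivalences (s ≫ σ) :=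
    weakEquivalences_of_comp_eq_self (comp_mem _ _ _ hs ht) hst
      (by rw [Category.assoc, reassoc_of% hσ])
  exact weakEquivalences_of_comp_of_section hσ hsσ

lemma weakEquivalences_of_comp_of_comp_of_isCofibrant {X Y Z T : M} (hZ : IsCofibrant Z) (r : X ⟶ Y)
    (s : Y ⟶ Z) (t : Z ⟶ T) (hrs : weakEquivalences (r ≫ s))
    (hst : weakEquivalences (s ≫ t)) : weakEquivalences s := by
  obtain ⟨_, t₁, t₂, ht₁, ht₁', ht₂, rfl⟩ := factorization_trivialCofibration_fibration t
  obtain ⟨_, m₁, m₂, -, hm₁, hm₂, hm⟩ := factorization_trivialCofibration_fibration (s ≫ t₁)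
  have hm₂' : weakEquivalences m₂ := by
    refine weakEquivalences_of_comp_of_comp_of_fibrations (hZ.of_cofibration ht₁) (r ≫ m₁)
      hm₂ ht₂ ?_ ?_
    · rw [Category.assoc, hm, ← Category.assoc]
      exact comp_mem _ _ _ hrs ht₁'
    · exact of_precomp _ _ _ hm₁ (by rwa [reassoc_of% hm])
  exact of_postcomp _ _ _ ht₁' (hm ▸ comp_mem _ _ _ hm₁ hm₂')

lemma weakEquivalences_of_comp_of_comp {X Y Z T : M} (r : X ⟶ Y) (s : Y ⟶ Z) (t : Z ⟶ T)
    (hrs : weakEquivalences (r ≫ s)) (hst : weakEquivalences (s ≫ t)) :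
    weakEquivalences s := by
  obtain ⟨X', pX, hX', -, hpX⟩ := exists_isCofibrant_trivialFibration X
  obtain ⟨Y', pY, hY', hpY, hpY'⟩ := exists_isCofibrant_trivialFibration Y
  obtain ⟨Z', pZ, hZ', hpZ, hpZ'⟩ := exists_isCofibrant_trivialFibration Z
  obtain ⟨r', hr'⟩ := hX' pY hpY hpY' (pX ≫ r)
  obtain ⟨s', hs'⟩ := hY' pZ hpZ hpZ' (pY ≫ s)
  have hs'W : weakEquivalences s' := by
    refine weakEquivalences_of_comp_of_comp_of_isCofibrant hZ' r' s' (pZ ≫ t) ?_ ?_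
    · refine of_postcomp _ _ _ hpZ' ?_
      rw [Category.assoc, hs', reassoc_of% hr']
      exact comp_mem _ _ _ hpX hrs
    · rw [reassoc_of% hs']
      exact comp_mem _ _ _ hpY' hst
  exact of_precomp _ _ _ hpY' (hs' ▸ comp_mem _ _ _ hs'W hpZ')

end ModelCategory

/-- In a model category, the weak equivalences satisfy the two-out-of-six
property. -/
theorem weakEquivalences_twoOutOfSix {M : Type u} [Category.{v} M] [ModelCategory M] :
    ∀ ⦃X Y Z T : M⦄ (r : X ⟶ Y) (s : Y ⟶ Z) (t : Z ⟶ T),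
      ModelCategory.weakEquivalences (r ≫ s) → ModelCategory.weakEquivalences (s ≫ t) →
      ModelCategory.weakEquivalences r ∧ ModelCategory.weakEquivalences s ∧
        ModelCategory.weakEquivalences t ∧ ModelCategory.weakEquivalences (r ≫ s ≫ t) := by
  intro X Y Z T r s t hrs hst
  have hs := ModelCategory.weakEquivalences_of_comp_of_comp r s t hrs hst
  have hr := of_postcomp _ _ _ hs hrs
  exact ⟨hr, hs, of_precomp _ _ _ hs hst, comp_mem _ _ _ hr hst⟩
end

section
/- (Functor categories inherit the functorial factorization.) Let C be a category and let W, U, V be classes of morphisms of C with U ⊆ W and V ⊆ W, equipped with a functorial factorization of the morphisms of W: an assignment to each morphism w : X ⟶ Y in W of an object F(w) and a factorization w = v(w) ∘ u(w) with u(w) : X ⟶ F(w) in U and v(w) : F(w) ⟶ Y in V, natural with respect to all commutative squares in C between morphisms of W. Let A be any category. Then every natural transformation η : F ⟶ G between functors F, G : A ⥤ C all of whose components lie in W admits a factorization η = β ∘ α through a functor H : A ⥤ C, where every component of α : F ⟶ H lies in U and every component of β : H ⟶ G lies in V. -/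
open CategoryTheory

universe v u v' u'

/-- A functorial factorization of the morphisms of `W` as a morphism of `U` followed
by a morphism of `V`: a functor `Z` on the full subcategory of the arrow category of
`C` spanned by the arrows lying in `W`, together with natural transformations from the
source functor to `Z` (with components in `U`) and from `Z` to the target functor
(with components in `V`) whose composite is the given arrow. -/
structure FunctorialFactorization {C : Type u} [Category.{v} C]
    (W U V : MorphismProperty C) where
  Z : ObjectProperty.FullSubcategory (fun f : Arrow C => W f.hom) ⥤ C
  u : ObjectProperty.ι (fun f : Arrow C => W f.hom) ⋙ Arrow.leftFunc ⟶ Z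
  v : Z ⟶ ObjectProperty.ι (fun f : Arrow C => W f.hom) ⋙ Arrow.rightFunc
  hu : ∀ w, U (u.app w)
  hv : ∀ w, V (v.app w)
  fac : ∀ w, u.app w ≫ v.app w = w.obj.hom

/-!
A natural transformation `η : F ⟶ G` is the same as a functor `A ⥤ Arrow C` with source
`F` and target `G`; when all components of `η` lie in `W` it lands in the full subcategory
of `W`-arrows. Composing it with the factorization functor gives `H`, and whiskering the
two halves `u` and `v` of the factorization gives `α` and `β`.
-/

def CategoryTheory.NatTrans.arrowFunctor {A : Type u'} [Category.{v'} A]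
    {C : Type u} [Category.{v} C] {F G : A ⥤ C} (η : F ⟶ G) : A ⥤ Arrow C where
  obj a := Arrow.mk (η.app a)
  map f := Arrow.homMk (F.map f) (G.map f) (η.naturality f)

namespace FunctorialFactorization

variable {C : Type u} [Category.{v} C] {W U V : MorphismProperty C}
  (FF : FunctorialFactorization W U V) {A : Type u'} [Category.{v'} A]

theorem whiskerLeft_u_comp_whiskerLeft_v
    (D : A ⥤ ObjectProperty.FullSubcategory (fun f : Arrow C => W f.hom)) :
    Functor.whiskerLeft D FF.u ≫ Functor.whiskerLeft D FF.v =
      Functor.whiskerLeft (D ⋙ ObjectProperty.ι _) Arrow.leftToRight := by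
  ext a
  exact FF.fac (D.obj a)

end FunctorialFactorization

theorem functorCategory_inherits_factorization_general {C : Type u} [Category.{v} C]
    (W U V : MorphismProperty C)
    (FF : FunctorialFactorization W U V)
    (A : Type u') [Category.{v'} A] (F G : A ⥤ C) (η : F ⟶ G)
    (hη : ∀ a : A, W (η.app a)) :
    ∃ (H : A ⥤ C) (α : F ⟶ H) (β : H ⟶ G),
      (∀ a : A, U (α.app a)) ∧ (∀ a : A, V (β.app a)) ∧ α ≫ β = η := by
  let D := ObjectProperty.lift (fun f : Arrow C => W f.hom) (NatTrans.arrowFunctor η) hη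
  -- `D ⋙ ι` is `NatTrans.arrowFunctor η` on the nose, so whiskering `Arrow.leftToRight`
  -- along it is `η` itself, up to definitional unfolding.
  exact ⟨D ⋙ FF.Z, Functor.whiskerLeft D FF.u, Functor.whiskerLeft D FF.v,
    fun a => FF.hu (D.obj a), fun a => FF.hv (D.obj a), FF.whiskerLeft_u_comp_whiskerLeft_v D⟩

/-- Functor categories inherit the functorial factorization: if the morphisms of `W`
factor functorially as a morphism of `U` followed by a morphism of `V`, then every
natural transformation `η : F ⟶ G` between functors `A ⥤ C` all of whose components
lie in `W` factors as `α ≫ β` through a functor `H`, where all components of `α`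
lie in `U` and all components of `β` lie in `V`. -/
theorem functorCategory_inherits_factorization {C : Type u} [Category.{v} C]
    (W U V : MorphismProperty C) (hUW : U ≤ W) (hVW : V ≤ W)
    (FF : FunctorialFactorization W U V)
    (A : Type u') [Category.{v'} A] (F G : A ⥤ C) (η : F ⟶ G)
    (hη : ∀ a : A, W (η.app a)) :
    ∃ (H : A ⥤ C) (α : F ⟶ H) (β : H ⟶ G),
      (∀ a : A, U (α.app a)) ∧ (∀ a : A, V (β.app a)) ∧ α ≫ β = η :=
  functorCategory_inherits_factorization_general W U V FF A F G η hη
end
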